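/- Let Z:[0,1]²→[0,1] be Lebesgue measurable, such that Z(x,·) is a cdf (non-decreasing, left-continuous, Z(x,0)=0) for every x∈[0,1], and such that ∫₀¹ Z(x,y)dx = y for every y∈[0,1]. Then for every α∈[0,1], the set of points x∈[0,1] at which the function Z(x,·) is discontinuous at the point y=α has Lebesgue measure zero. -/

import Mathlib

/-!
For `α < α' ≤ 1` the jump of `Z(x,·)` at `α` is at most `Z(x,α') - Z(x,α)`, a nonnegative
function of `x` with integral `α' - α`; at `α = 1` the jump is `1 - Z(x,1)`, with integral `0`.
So the jump is dominated by nonnegative functions of arbitrarily small integral, and Markov's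
inequality forces it to vanish almost everywhere. No measurability of `Z` is needed: a section
`Z(·,y)` with `y > 0` has integral `y ≠ 0`, so it is integrable (a non-integrable function has
integral `0` in Lean), and `Z(·,0) = 0` on `[0,1]`.
-/

open MeasureTheory Filter Set

open scoped Classical

noncomputable section

/-- The number of occurrences of the pattern `τ` in the permutation `π`:
increasing tuples `x₁ < ... < x_k` such that `π` restricted to them has the
same relative order as `τ`. -/
def occCount {k n : ℕ} (τ : Equiv.Perm (Fin k)) (π : Equiv.Perm (Fin n)) : ℕ :=
  Set.ncard {x : Fin k → Fin n | StrictMono x ∧ ∀ i j : Fin k, π (x i) < π (x j) ↔ τ i < τ j}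

/-- The subpermutation density `t(τ, π)`. -/
def densP {k n : ℕ} (τ : Equiv.Perm (Fin k)) (π : Equiv.Perm (Fin n)) : ℝ :=
  if k ≤ n then (occCount τ π : ℝ) / (n.choose k : ℝ) else 0

/-- `F` is a cumulative distribution function on `[0,1]`: non-decreasing,
left-continuous, `F 0 = 0`, with values in `[0,1]`. -/
def IsCDF (F : ℝ → ℝ) : Prop :=
  MonotoneOn F (Set.Icc 0 1) ∧
    (∀ a ∈ Set.Ioc (0:ℝ) 1, Tendsto F (nhdsWithin a (Set.Iio a)) (nhds (F a))) ∧
    F 0 = 0 ∧ ∀ y ∈ Set.Icc (0:ℝ) 1, F y ∈ Set.Icc (0:ℝ) 1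

/-- `Z` is a limit permutation. -/
def LimitPerm (Z : ℝ → ℝ → ℝ) : Prop :=
  Measurable (fun p : Set.Icc (0:ℝ) 1 × Set.Icc (0:ℝ) 1 => Z (p.1 : ℝ) (p.2 : ℝ)) ∧
    (∀ x ∈ Set.Icc (0:ℝ) 1,
      IsCDF (Z x) ∧ Tendsto (Z x) (nhdsWithin 0 (Set.Ioi 0)) (nhds (Z x 0)) ∧ Z x 1 = 1) ∧
    ∀ y ∈ Set.Icc (0:ℝ) 1, (∫ x in Set.Icc (0:ℝ) 1, Z x y) = y

/-- `μ x` is the Lebesgue–Stieltjes probability measure of the cdf `Z x`, for each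
`x ∈ [0,1]`. -/
def LSFamily (Z : ℝ → ℝ → ℝ) (μ : ℝ → Measure ℝ) : Prop :=
  ∀ x ∈ Set.Icc (0:ℝ) 1,
    IsProbabilityMeasure (μ x) ∧ μ x (Set.Icc 0 1) = 1 ∧
      ∀ a b : ℝ, 0 ≤ a → a ≤ b → b ≤ 1 →
        μ x (Set.Ico a b) = ENNReal.ofReal (Z x b - Z x a)

/-- The set of increasing `m`-tuples `0 ≤ y₁ < y₂ < ... < y_m ≤ 1`. -/
def incSimplex (m : ℕ) : Set (Fin m → ℝ) :=
  {y | StrictMono y ∧ ∀ i, y i ∈ Set.Icc (0:ℝ) 1}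

/-- The core function `L_{τ,Z}` of a limit permutation, expressed through the
associated family `μ` of Lebesgue–Stieltjes measures: the product measure
`μ_{x_{τ⁻¹(1)}} × ... × μ_{x_{τ⁻¹(m)}}` of the simplex `{y₁ < ... < y_m}`. -/
def coreFn {m : ℕ} (τ : Equiv.Perm (Fin m)) (μ : ℝ → Measure ℝ) (x : Fin m → ℝ) : ℝ :=
  ((Measure.pi fun i => μ (x (τ.symm i))) (incSimplex m)).toReal

/-- The subpermutation density `t(τ, Z)` of `τ` in a limit permutation `Z`,
expressed through the associated family `μ` of Lebesgue–Stieltjes measures. -/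
def densL {m : ℕ} (τ : Equiv.Perm (Fin m)) (μ : ℝ → Measure ℝ) : ℝ :=
  (Nat.factorial m : ℝ) * ∫ x in incSimplex m, coreFn τ μ x

/-- The rectangular distance between two families of measures (coming from
functions `[0,1]² → [0,1]` whose sections are cdfs). -/
def rectDist (μ₁ μ₂ : ℝ → Measure ℝ) : ℝ :=
  sSup {d : ℝ | ∃ x₁ x₂ α₁ α₂ : ℝ,
    0 ≤ x₁ ∧ x₁ < x₂ ∧ x₂ ≤ 1 ∧ 0 ≤ α₁ ∧ α₁ < α₂ ∧ α₂ ≤ 1 ∧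
    d = |(∫ x in Set.Icc x₁ x₂, (μ₁ x (Set.Icc α₁ α₂)).toReal) -
          ∫ x in Set.Icc x₁ x₂, (μ₂ x (Set.Icc α₁ α₂)).toReal|}

/-- A weighted permutation of order `k`; entries are 0-based, so `Q i j`
stands for `Q(i+1, j+1)` in the 1-based notation. -/
def WeightedPerm {k : ℕ} (Q : Fin k → Fin k → ℝ) : Prop :=
  (∀ i j, Q i j ∈ Set.Icc (0:ℝ) 1) ∧ (∀ i, Monotone (Q i)) ∧
    ∀ j : Fin k, (j : ℝ) ≤ ∑ i, Q i j ∧ ∑ i, Q i j ≤ (j : ℝ) + 1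

/-- `Q` extended by the conventions `Q(i,0) = 0` and `Q(i,a) = 1` for `a ≥ k+1`;
the second argument `a : ℕ` is 1-based. -/
def Qext {k : ℕ} (Q : Fin k → Fin k → ℝ) (i : Fin k) (a : ℕ) : ℝ :=
  if h : 1 ≤ a ∧ a ≤ k then Q i ⟨a - 1, by omega⟩ else if a = 0 then 0 else 1

/-- The subpermutation density `t(τ, Q)` of `τ` in a weighted permutation `Q`. -/
def densW {m n : ℕ} (τ : Equiv.Perm (Fin m)) (Q : Fin n → Fin n → ℝ) : ℝ :=
  (n.choose m : ℝ)⁻¹ *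
    ∑ X ∈ Finset.univ.filter (fun X : Fin m → Fin n => StrictMono X),
      ∑ A ∈ Finset.univ.filter (fun A : Fin m → Fin (n + 1) => StrictMono A),
        ∏ i : Fin m, (Qext Q (X i) ((A (τ i) : ℕ) + 1) - Qext Q (X i) (A (τ i) : ℕ))

/-- The rectangular distance between two square matrices of order `n`
(in particular, weighted permutations): `a` and `b` range over `[n+1]`
(1-based) with `a < b`, and `S` over the subintervals of `[n]`. -/
def rectDistW {n : ℕ} (Q₁ Q₂ : Fin n → Fin n → ℝ) : ℝ :=
  sSup {d : ℝ | ∃ (lo hi : Fin n) (a b : ℕ), 1 ≤ a ∧ a < b ∧ b ≤ n + 1 ∧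
    d = (n : ℝ)⁻¹ * |∑ x ∈ Finset.Icc lo hi,
        ((Qext Q₁ x b - Qext Q₁ x a) - (Qext Q₂ x b - Qext Q₂ x a))|}

/-- The bipartite adjacency matrix `Q_σ` of the graph of a permutation:
`Q_σ(a,b) = 1` iff `σ(a) < b` (1-based). -/
def QofPerm {n : ℕ} (σ : Equiv.Perm (Fin n)) : Fin n → Fin n → ℝ :=
  fun i j => if (σ i : ℕ) < (j : ℕ) then 1 else 0

/-- The step function `Z_Q : [0,1]² → [0,1]` associated with a matrix `Q` of
order `n`: `Z_Q(x,y) = 0` if `y = 0`, `Z_Q(0,y) = ⌈ny⌉/n`, and otherwise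
`Z_Q(x,y) = Q(⌈nx⌉, ⌈ny⌉)` (1-based, with the conventions of `Qext`). -/
def stepW {n : ℕ} (Q : Fin n → Fin n → ℝ) : ℝ → ℝ → ℝ := fun x y =>
  if y = 0 then 0
  else if x = 0 then ((⌈(n : ℝ) * y⌉ : ℤ) : ℝ) / (n : ℝ)
  else if h : ∃ i : Fin n, ((i : ℕ) + 1 : ℤ) = ⌈(n : ℝ) * x⌉ then
    Qext Q h.choose (⌈(n : ℝ) * y⌉).toNat
  else 0

/-- The family of Lebesgue–Stieltjes measures of the step function `Z_Q`:
for `x` with `⌈nx⌉ = i ∈ [n]`, the cdf `Z_Q(x,·)` is a step function whose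
Lebesgue–Stieltjes measure places mass `Q(i,j+1) - Q(i,j)` at the point `j/n`
for `0 ≤ j ≤ n`. -/
def stepWMeasures {n : ℕ} (Q : Fin n → Fin n → ℝ) : ℝ → Measure ℝ := fun x =>
  if h : ∃ i : Fin n, ((i : ℕ) + 1 : ℤ) = ⌈(n : ℝ) * x⌉ then
    ∑ j : Fin (n + 1),
      ENNReal.ofReal (Qext Q h.choose ((j : ℕ) + 1) - Qext Q h.choose (j : ℕ)) •
        Measure.dirac ((j : ℝ) / (n : ℝ))
  else Measure.dirac 0

/-- The step function `Z_σ` of a permutation `σ`. -/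
def stepFun {n : ℕ} (σ : Equiv.Perm (Fin n)) : ℝ → ℝ → ℝ := stepW (QofPerm σ)

/-- The family of Lebesgue–Stieltjes measures of the step function `Z_σ`. -/
def stepMeasures {n : ℕ} (σ : Equiv.Perm (Fin n)) : ℝ → Measure ℝ :=
  stepWMeasures (QofPerm σ)

/-- The joint law of `((X₁,...,Xₙ), (a₁,...,aₙ))`, where the `Xᵢ` are i.i.d.
uniform on `[0,1]` and, conditionally on the `Xᵢ`, the `aᵢ` are independent
with `aᵢ` distributed according to `μ (Xᵢ)`. -/
def jointMeasure (μ : ℝ → Measure ℝ) (n : ℕ) : Measure ((Fin n → ℝ) × (Fin n → ℝ)) :=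
  (Measure.pi fun _ : Fin n => volume.restrict (Set.Icc (0:ℝ) 1)).bind fun X =>
    (Measure.pi fun i => μ (X i)).map fun a => (X, a)

/-- The (1-based) rank of `v i` among `v 1, ..., v n`. -/
def rankOf {n : ℕ} (v : Fin n → ℝ) (i : Fin n) : ℕ :=
  (Finset.univ.filter fun j => v j ≤ v i).card

/-- `π` is the permutation `S ∘ R⁻¹` determined by the sample
`ω = ((X₁,...,Xₙ), (a₁,...,aₙ))`, where `R` and `S` are the rank functions
of the `Xᵢ` and the `aᵢ`. -/
def IsSamplePerm {n : ℕ} (ω : (Fin n → ℝ) × (Fin n → ℝ)) (π : Equiv.Perm (Fin n)) : Prop :=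
  ∀ i p q : Fin n, rankOf ω.1 i = (p : ℕ) + 1 → rankOf ω.2 i = (q : ℕ) + 1 → π p = q

/-- The `Z`-random permutation determined by the sample `ω`; it is well defined
(the witness is unique) off a null set. -/
def samplePerm {n : ℕ} (ω : (Fin n → ℝ) × (Fin n → ℝ)) : Equiv.Perm (Fin n) :=
  if h : ∃! π : Equiv.Perm (Fin n), IsSamplePerm ω π then h.choose else 1

/-- The subinterval `{lo+1, ..., hi}` of `[n]` (as a finset of 0-based indices
`x` with `lo ≤ x < hi`). -/
def intervalFin (n : ℕ) (lo hi : ℕ) : Finset (Fin n) :=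
  Finset.univ.filter fun x => lo ≤ (x : ℕ) ∧ (x : ℕ) < hi

/-- `c : Fin (k+1) → ℕ` is the sequence of cut points of an equitable
`k`-partition of `[n]` into consecutive intervals `C_i = {c i + 1, ..., c (i+1)}`. -/
def IsEquipartition {k : ℕ} (n : ℕ) (c : Fin (k + 1) → ℕ) : Prop :=
  Monotone c ∧ c 0 = 0 ∧ c (Fin.last k) = n ∧
    ∀ i j : Fin k, ((intervalFin n (c i.castSucc) (c i.succ)).card : ℤ) -
      ((intervalFin n (c j.castSucc) (c j.succ)).card : ℤ) ≤ 1

/-- The number of edges of the graph `G_σ` between `A` and `B`: pairs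
`(a,b) ∈ A × B` with `σ(a) < b` (1-based). -/
def edgeCount {n : ℕ} (σ : Equiv.Perm (Fin n)) (A B : Finset (Fin n)) : ℕ :=
  ((A ×ˢ B).filter fun p => (σ p.1 : ℕ) < (p.2 : ℕ)).card

/-- The partition matrix `Q_{σ,P}` of `σ` induced by the partition with cut
points `c`. -/
def partMatrix {n k : ℕ} (σ : Equiv.Perm (Fin n)) (c : Fin (k + 1) → ℕ) :
    Fin k → Fin k → ℝ := fun u w =>
  (edgeCount σ (intervalFin n (c u.castSucc) (c u.succ))
      (intervalFin n (c w.castSucc) (c w.succ)) : ℝ) /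
    (((intervalFin n (c u.castSucc) (c u.succ)).card : ℝ) *
      ((intervalFin n (c w.castSucc) (c w.succ)).card : ℝ))

/-- The blow-up matrix `K(P,Q) : [n]² → [0,1]` of the matrix `Q : [k]² → [0,1]`
with respect to the partition with cut points `c`. -/
def blowup {n k : ℕ} (c : Fin (k + 1) → ℕ) (Q : Fin k → Fin k → ℝ) :
    Fin n → Fin n → ℝ := fun x y =>
  if hx : ∃ i : Fin k, c i.castSucc ≤ (x : ℕ) ∧ (x : ℕ) < c i.succ then
    if hy : ∃ j : Fin k, c j.castSucc ≤ (y : ℕ) ∧ (y : ℕ) < c j.succ then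
      Q hx.choose hy.choose
    else 0
  else 0

/-- The right limit `lim_{α' → α⁺} F(α')` of a (monotone) cdf `F` on `[0,1]`,
with the convention that the limit at `α = 1` is `1`. -/
def cdfRightLim (F : ℝ → ℝ) (α : ℝ) : ℝ :=
  if α = 1 then 1 else sInf (F '' Set.Ioc α 1)

/-- The cdf `F` is discontinuous at `α`: `lim_{α' → α⁺} F(α') > F(α)`. -/
def cdfDiscontAt (F : ℝ → ℝ) (α : ℝ) : Prop :=
  F α < cdfRightLim F α

theorem ae_nonpos_of_forall_ae_le_of_integral_le {X : Type*} [MeasurableSpace X]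
    {μ : Measure X} {J : X → ℝ}
    (h : ∀ δ > 0, ∃ g : X → ℝ, Integrable g μ ∧ 0 ≤ᵐ[μ] g ∧ J ≤ᵐ[μ] g ∧ ∫ x, g x ∂μ ≤ δ) :
    ∀ᵐ x ∂μ, J x ≤ 0 := by
  have level_null : ∀ ε > 0, μ {x | ε ≤ J x} = 0 := by
    intro ε hε
    refine le_antisymm (ENNReal.le_of_forall_pos_le_add fun η hη _ => ?_) zero_le
    obtain ⟨g, hg, hg_nonneg, hJg, hg_small⟩ := h (ε * η) (by positivity)
    have markov : ε * μ.real {x | ε ≤ g x} ≤ ε * η :=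
      (mul_meas_ge_le_integral_of_nonneg hg_nonneg hg ε).trans hg_small
    calc μ {x | ε ≤ J x} ≤ μ {x | ε ≤ g x} :=
          measure_mono_ae (hJg.mono fun x hx (hεx : ε ≤ J x) => hεx.trans hx)
      _ = ENNReal.ofReal (μ.real {x | ε ≤ g x}) :=
          (ENNReal.ofReal_toReal (hg.measure_ge_lt_top hε).ne).symm
      _ ≤ ENNReal.ofReal η := ENNReal.ofReal_le_ofReal (le_of_mul_le_mul_left markov hε)
      _ = 0 + η := by simp
  have below_all : ∀ᵐ x ∂μ, ∀ n : ℕ, J x < 1 / (n + 1) := ae_all_iff.2 fun n => by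
    simpa only [ae_iff, not_lt] using level_null _ Nat.one_div_pos_of_nat
  filter_upwards [below_all] with x hx
  by_contra! hpos
  obtain ⟨n, hn⟩ := exists_nat_one_div_lt hpos
  exact (hx n).not_gt hn

theorem IsCDF.cdfRightLim_le {F : ℝ → ℝ} (hF : IsCDF F) {α α' : ℝ} (hα : 0 ≤ α)
    (hαα' : α < α') (hα' : α' ≤ 1) : cdfRightLim F α ≤ F α' := by
  rw [cdfRightLim, if_neg (hαα'.trans_le hα').ne]
  refine csInf_le ⟨0, ?_⟩ ⟨α', ⟨hαα', hα'⟩, rfl⟩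
  rintro _ ⟨y, hy, rfl⟩
  exact (hF.2.2.2 y ⟨hα.trans hy.1.le, hy.2⟩).1

theorem integrable_section_of_integral_eq {Z : ℝ → ℝ → ℝ}
    (h0 : ∀ x ∈ Icc (0:ℝ) 1, Z x 0 = 0)
    (hmass : ∀ y ∈ Icc (0:ℝ) 1, (∫ x in Icc (0:ℝ) 1, Z x y) = y) ⦃y : ℝ⦄
    (hy : y ∈ Icc (0:ℝ) 1) : Integrable (fun x => Z x y) (volume.restrict (Icc 0 1)) := by
  rcases hy.1.eq_or_lt with rfl | hy_pos
  · refine (integrable_zero _ _ _).congr ?_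
    filter_upwards [ae_restrict_mem measurableSet_Icc] with x hx
    exact (h0 x hx).symm
  · exact Integrable.of_integral_ne_zero (by rw [hmass y hy]; exact hy_pos.ne')

theorem exists_integral_le_dominating_cdfJump {Z : ℝ → ℝ → ℝ}
    (hcdf : ∀ x ∈ Icc (0:ℝ) 1, IsCDF (Z x))
    (hmass : ∀ y ∈ Icc (0:ℝ) 1, (∫ x in Icc (0:ℝ) 1, Z x y) = y) {α : ℝ}
    (hα : α ∈ Icc (0:ℝ) 1) {δ : ℝ} (hδ : 0 < δ) :
    ∃ g : ℝ → ℝ, Integrable g (volume.restrict (Icc 0 1)) ∧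
      0 ≤ᵐ[volume.restrict (Icc 0 1)] g ∧
      (fun x => cdfRightLim (Z x) α - Z x α) ≤ᵐ[volume.restrict (Icc 0 1)] g ∧
      ∫ x in Icc (0:ℝ) 1, g x ≤ δ := by
  have hint := integrable_section_of_integral_eq (fun x hx => (hcdf x hx).2.2.1) hmass
  rcases hα.2.eq_or_lt with rfl | hα_lt
  · have h1 : (1:ℝ) ∈ Icc (0:ℝ) 1 := right_mem_Icc.2 zero_le_one
    refine ⟨fun x => 1 - Z x 1, (integrable_const 1).sub (hint h1), ?_, ?_, ?_⟩
    · filter_upwards [ae_restrict_mem measurableSet_Icc] with x hx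
      exact sub_nonneg.2 ((hcdf x hx).2.2.2 1 h1).2
    · exact ae_of_all _ fun x => by simp [cdfRightLim]
    · rw [integral_sub (integrable_const 1) (hint h1), hmass 1 h1]
      simpa using hδ.le
  · set α' := min (α + δ) 1
    have hαα' : α < α' := lt_min (by linarith) hα_lt
    have hα' : α' ∈ Icc (0:ℝ) 1 := ⟨hα.1.trans hαα'.le, min_le_right _ _⟩
    refine ⟨fun x => Z x α' - Z x α, (hint hα').sub (hint hα), ?_, ?_, ?_⟩
    · filter_upwards [ae_restrict_mem measurableSet_Icc] with x hx
      exact sub_nonneg.2 ((hcdf x hx).1 hα hα' hαα'.le)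
    · filter_upwards [ae_restrict_mem measurableSet_Icc] with x hx
      exact sub_le_sub_right ((hcdf x hx).cdfRightLim_le hα.1 hαα' hα'.2) _
    · rw [integral_sub (hint hα') (hint hα), hmass α' hα', hmass α hα]
      linarith [min_le_left (α + δ) 1]

theorem discontinuity_set_null_general
    (Z : ℝ → ℝ → ℝ)
    (hcdf : ∀ x ∈ Set.Icc (0:ℝ) 1, IsCDF (Z x))
    (hmass : ∀ y ∈ Set.Icc (0:ℝ) 1, (∫ x in Set.Icc (0:ℝ) 1, Z x y) = y)
    (α : ℝ) (hα : α ∈ Set.Icc (0:ℝ) 1) :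
    volume {x ∈ Set.Icc (0:ℝ) 1 | cdfDiscontAt (Z x) α} = 0 := by
  have jump_nonpos : ∀ᵐ x ∂volume.restrict (Icc (0:ℝ) 1), cdfRightLim (Z x) α - Z x α ≤ 0 :=
    ae_nonpos_of_forall_ae_le_of_integral_le fun δ hδ =>
      exists_integral_le_dominating_cdfJump hcdf hmass hα hδ
  rw [ae_restrict_iff' measurableSet_Icc] at jump_nonpos
  rw [measure_eq_zero_iff_ae_notMem]
  filter_upwards [jump_nonpos] with x hx ⟨hxI, hdisc⟩
  exact (sub_nonpos.1 (hx hxI)).not_gt hdisc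

/-- for every `α ∈ [0,1]`, the set of `x ∈ [0,1]` such that the
cdf `Z(x,·)` is discontinuous at `α` has Lebesgue measure zero. -/
theorem discontinuity_set_null
    (Z : ℝ → ℝ → ℝ)
    (hmeas : Measurable (fun p : Set.Icc (0:ℝ) 1 × Set.Icc (0:ℝ) 1 => Z (p.1 : ℝ) (p.2 : ℝ)))
    (hcdf : ∀ x ∈ Set.Icc (0:ℝ) 1, IsCDF (Z x))
    (hmass : ∀ y ∈ Set.Icc (0:ℝ) 1, (∫ x in Set.Icc (0:ℝ) 1, Z x y) = y)
    (α : ℝ) (hα : α ∈ Set.Icc (0:ℝ) 1) :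
    volume {x ∈ Set.Icc (0:ℝ) 1 | cdfDiscontAt (Z x) α} = 0 :=
  discontinuity_set_null_general Z hcdf hmass α hα

end
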